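/- arXiv:2002.05064 — 2 statements merged into one kernel-verified Lean document; each statement's English description precedes it below -/
import Mathlib

section
/- With the digit-list encoding of fixed-precision decimals, the digit-wise addition-with-carry operation on digit lists is correct: for non-negative reals a, b, c each having prec-digit decimal representations, dec(a) + dec(b) = dec(c) if and only if adding the digit lists List(a) and List(b) with carry propagation (starting carry 0, each position producing digit (dᵢ+eᵢ+carry) mod 10 and new carry (dᵢ+eᵢ+carry) div 10) yields List(c) with final carry 0; and the final carry is 1 iff a + b has no prec-digit representation (overflow). -/
/-- The numeric value of a digit list (least significant digit first). -/
def digitVal : List ℕ → ℕ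
  | [] => 0
  | d :: ds => d + 10 * digitVal ds

/-- Digit-wise addition with carry propagation on zipped digit pairs,
returning the resulting digit list and the final carry. -/
def addCarry : List (ℕ × ℕ) → ℕ → List ℕ × ℕ
  | [], c => ([], c)
  | (d, e) :: rest, c =>
    let r := addCarry rest ((d + e + c) / 10)
    ((d + e + c) % 10 :: r.1, r.2)

/-! Carry addition preserves an invariant: the value of the output digits plus the final carry
at weight `10 ^ n` equals the sum of the inputs plus the initial carry. As the output digits are
decimal digits, the final carry and the output value are the quotient and remainder of the sum
by `10 ^ n`, and an `n`-digit decimal list is determined by its value. -/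

theorem digitVal_eq_ofDigits : ∀ l : List ℕ, digitVal l = Nat.ofDigits 10 l
  | [] => rfl
  | d :: ds => by rw [digitVal, Nat.ofDigits_cons, digitVal_eq_ofDigits ds]

theorem digitVal_lt_pow_length {l : List ℕ} (hl : ∀ d ∈ l, d ≤ 9) :
    digitVal l < 10 ^ l.length :=
  digitVal_eq_ofDigits l ▸
    Nat.ofDigits_lt_base_pow_length (by norm_num) fun d hd => Nat.lt_succ_of_le (hl d hd)

theorem eq_of_digitVal_eq {l m : List ℕ} (hlen : l.length = m.length)
    (hl : ∀ d ∈ l, d ≤ 9) (hm : ∀ d ∈ m, d ≤ 9) (h : digitVal l = digitVal m) : l = m :=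
  Nat.ofDigits_inj_of_len_eq (by norm_num) hlen
    (fun d hd => Nat.lt_succ_of_le (hl d hd)) (fun d hd => Nat.lt_succ_of_le (hm d hd))
    (by rwa [← digitVal_eq_ofDigits, ← digitVal_eq_ofDigits])

theorem length_addCarry_fst : ∀ (l : List (ℕ × ℕ)) (c : ℕ), (addCarry l c).1.length = l.length
  | [], _ => rfl
  | (_, _) :: rest, _ => by simp [addCarry, length_addCarry_fst rest]

theorem le_nine_of_mem_addCarry_fst :
    ∀ (l : List (ℕ × ℕ)) (c : ℕ), ∀ d ∈ (addCarry l c).1, d ≤ 9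
  | [], _ => by simp [addCarry]
  | (d, e) :: rest, c => by
    simp only [addCarry, List.mem_cons]
    rintro t (rfl | ht)
    · omega
    · exact le_nine_of_mem_addCarry_fst rest _ t ht

theorem digitVal_addCarry : ∀ (l : List (ℕ × ℕ)) (c : ℕ),
    digitVal (addCarry l c).1 + (addCarry l c).2 * 10 ^ l.length
      = digitVal (l.map Prod.fst) + digitVal (l.map Prod.snd) + c
  | [], c => by simp [addCarry, digitVal]
  | (d, e) :: rest, c => by
    have ih := digitVal_addCarry rest ((d + e + c) / 10)
    have hdiv := Nat.div_add_mod (d + e + c) 10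
    simp only [addCarry, digitVal, List.map_cons, List.length_cons, pow_succ]
    set r := addCarry rest ((d + e + c) / 10)
    calc (d + e + c) % 10 + 10 * digitVal r.1 + r.2 * (10 ^ rest.length * 10)
        = (d + e + c) % 10 + 10 * (digitVal r.1 + r.2 * 10 ^ rest.length) := by ring
      _ = d + 10 * digitVal (rest.map Prod.fst) + (e + 10 * digitVal (rest.map Prod.snd)) + c := by
        rw [ih]; omega

section Zip

variable {x y : List ℕ} {n : ℕ}

theorem digitVal_addCarry_zip (hx : x.length = n) (hy : y.length = n) (c : ℕ) :
    digitVal (addCarry (x.zip y) c).1 + (addCarry (x.zip y) c).2 * 10 ^ n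
      = digitVal x + digitVal y + c := by
  have hxy : x.length = y.length := hx.trans hy.symm
  have := digitVal_addCarry (x.zip y) c
  rwa [List.map_fst_zip hxy.le, List.map_snd_zip hxy.ge, List.length_zip, hx, hy,
    min_self] at this

theorem addCarry_zip_zero_eq_divMod (hx : x.length = n) (hy : y.length = n) :
    (digitVal x + digitVal y) / 10 ^ n = (addCarry (x.zip y) 0).2 ∧
      (digitVal x + digitVal y) % 10 ^ n = digitVal (addCarry (x.zip y) 0).1 := by
  have hlt := digitVal_lt_pow_length (le_nine_of_mem_addCarry_fst (x.zip y) 0)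
  rw [length_addCarry_fst, List.length_zip, hx, hy, min_self] at hlt
  refine (Nat.div_mod_unique (by positivity)).2 ⟨?_, hlt⟩
  rw [mul_comm, digitVal_addCarry_zip hx hy, add_zero]

end Zip

/-- Correctness of digit-wise addition with carry: for digit lists `x y z` of
length `prec` with digits ≤ 9 (encoding prec-digit decimals least significant
digit first), the values add up exactly iff carry-addition of `x` and `y`
yields `z` with final carry 0; and the final carry is 1 iff the sum overflows
(has no prec-digit representation). -/
theorem digit_addition_correct (prec : ℕ) (x y z : List ℕ)
    (hx : x.length = prec) (hy : y.length = prec) (hz : z.length = prec)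
    (hxd : ∀ d ∈ x, d ≤ 9) (hyd : ∀ d ∈ y, d ≤ 9) (hzd : ∀ d ∈ z, d ≤ 9) :
    (digitVal x + digitVal y = digitVal z ↔ addCarry (x.zip y) 0 = (z, 0)) ∧
    ((addCarry (x.zip y) 0).2 = 1 ↔ 10 ^ prec ≤ digitVal x + digitVal y) := by
  obtain ⟨hcarry, hdigits⟩ := addCarry_zip_zero_eq_divMod hx hy
  have hxlt := hx ▸ digitVal_lt_pow_length hxd
  have hylt := hy ▸ digitVal_lt_pow_length hyd
  have hzlt := hz ▸ digitVal_lt_pow_length hzd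
  refine ⟨⟨fun hsum => ?_, fun hadd => ?_⟩, ?_⟩
  · rw [hsum, Nat.mod_eq_of_lt hzlt] at hdigits
    rw [hsum, Nat.div_eq_of_lt hzlt] at hcarry
    refine Prod.ext (eq_of_digitVal_eq ?_ (le_nine_of_mem_addCarry_fst _ _) hzd hdigits.symm)
      hcarry.symm
    rw [length_addCarry_fst, List.length_zip, hx, hy, hz, min_self]
  · rw [hadd] at hcarry hdigits
    rw [← Nat.div_add_mod (digitVal x + digitVal y) (10 ^ prec), hcarry, hdigits]
    simp
  · rw [← hcarry, Nat.div_eq_iff (by positivity)]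
    omega
end

section
/- For the fold-based selection operator that scans a list (a model) from its first element to its last and collects the ID (head) of each tuple whose form matches a given form name, skipping tuples whose ID was already collected, the result is exactly the list of IDs d such that some tuple in the model has ID d and form equal to the given form name, each ID occurring exactly once. -/
/-! Generalize the empty initial accumulator to an arbitrary one: each fold step adds exactly the
ID of the current tuple when its form matches, and appends only IDs not yet present, so both
invariants pass through the induction on the model. -/

section CollectStep

variable {α β : Type*} [DecidableEq β] (f : α → β) (p : α → Prop) [DecidablePred p]

def collectStep (acc : List β) (b : α) : List β :=
  if f b ∈ acc then acc else if p b then acc ++ [f b] else acc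

variable {f p}

theorem mem_collectStep {acc : List β} {b : α} {d : β} :
    d ∈ collectStep f p acc b ↔ d ∈ acc ∨ f b = d ∧ p b := by
  unfold collectStep
  split_ifs with hmem hp
  · exact ⟨Or.inl, by rintro (hd | ⟨rfl, -⟩) <;> assumption⟩
  · simp [hp, eq_comm]
  · simp [hp]

theorem nodup_collectStep {acc : List β} (hacc : acc.Nodup) (b : α) :
    (collectStep f p acc b).Nodup := by
  unfold collectStep
  split_ifs with hmem
  · exact hacc
  · exact hacc.append (List.nodup_singleton _) (by simpa using hmem)
  · exact hacc

theorem mem_foldl_collectStep (l : List α) (acc : List β) (d : β) :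
    d ∈ l.foldl (collectStep f p) acc ↔ d ∈ acc ∨ ∃ b ∈ l, f b = d ∧ p b := by
  induction l generalizing acc with
  | nil => simp
  | cons a l ih =>
    simp only [List.foldl_cons, ih, mem_collectStep, List.exists_mem_cons_iff, or_assoc]

theorem nodup_foldl_collectStep {acc : List β} (hacc : acc.Nodup) (l : List α) :
    (l.foldl (collectStep f p) acc).Nodup := by
  induction l generalizing acc with
  | nil => exact hacc
  | cons a l ih => exact ih (nodup_collectStep hacc a)

end CollectStep

/-- Correctness of the fold-based document filter: scanning the model from its
first tuple to its last and collecting the ID of each tuple whose form matches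
the given form name (skipping tuples whose ID was already collected) yields
exactly the IDs of tuples of the given form, each occurring exactly once.
Here `Tup` is the type of model tuples ⟨sit, form, doc, ID⟩, with `tupId`
giving the ID and `tupForm` the form name of a tuple. -/
theorem filter_fold_correct {Tup F : Type*} [DecidableEq F]
    (tupId : Tup → ℕ) (tupForm : Tup → F) (model : List Tup) (fName : F) :
    (∀ d : ℕ,
      d ∈ model.foldl
          (fun acc b =>
            if tupId b ∈ acc then acc
            else if tupForm b = fName then acc ++ [tupId b] else acc)
          [] ↔
        ∃ b ∈ model, tupId b = d ∧ tupForm b = fName) ∧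
    (model.foldl
        (fun acc b =>
          if tupId b ∈ acc then acc
          else if tupForm b = fName then acc ++ [tupId b] else acc)
        []).Nodup :=
  ⟨fun d => (mem_foldl_collectStep model [] d).trans (by simp),
    nodup_foldl_collectStep List.nodup_nil model⟩
end
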